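/- The π/2-twisted basis measurement satisfies the one-ebit localizability condition: for every b ∈ {X,Y,Z}, the matrix M_tw†·(I₂⊗σ_b)·M_tw is a permutation matrix with phases. -/

import Mathlib

open Matrix Complex Kronecker

noncomputable section

/-- The identification of `Fin 2 × Fin 2` with `Fin 4`, ordering pairs as 00,01,10,11. -/
def pairEquiv : Fin 2 × Fin 2 ≃ Fin 4 where
  toFun p := ⟨2 * p.1.val + p.2.val, by have h1 := p.1.isLt; have h2 := p.2.isLt; omega⟩
  invFun k := (⟨k.val / 2, by have := k.isLt; omega⟩, ⟨k.val % 2, by omega⟩)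
  left_inv := by decide
  right_inv := by decide

/-- Kronecker product of two 2×2 matrices, as a 4×4 matrix indexed by `Fin 4`
with the ordering 00,01,10,11. -/
def kron (A B : Matrix (Fin 2) (Fin 2) ℂ) : Matrix (Fin 4) (Fin 4) ℂ :=
  Matrix.reindex pairEquiv pairEquiv (A ⊗ₖ B)

def σX : Matrix (Fin 2) (Fin 2) ℂ := !![0, 1; 1, 0]
def σY : Matrix (Fin 2) (Fin 2) ℂ := !![0, -Complex.I; Complex.I, 0]
def σZ : Matrix (Fin 2) (Fin 2) ℂ := !![1, 0; 0, -1]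

/-- The Pauli matrices indexed as σ₀ = I₂, σ₁ = σ_X, σ₂ = σ_Y, σ₃ = σ_Z. -/
def pauli (a : Fin 4) : Matrix (Fin 2) (Fin 2) ℂ :=
  if a = 0 then 1 else if a = 1 then σX else if a = 2 then σY else σZ

/-- A 4×4 complex matrix is a permutation matrix with phases if there is a permutation
`π` of the indices and unit-modulus phases `φ j` with `P (π j) j = φ j` and all other
entries zero. -/
def PermPhase (P : Matrix (Fin 4) (Fin 4) ℂ) : Prop :=
  ∃ (π : Equiv.Perm (Fin 4)) (φ : Fin 4 → ℂ),
    (∀ j, ‖φ j‖ = 1) ∧ ∀ i j, P i j = if i = π j then φ j else 0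

/-- `M` satisfies the one-ebit localizability condition. -/
def OneEbitLocal (M : Matrix (Fin 4) (Fin 4) ℂ) : Prop :=
  ∀ b ∈ ({σX, σY, σZ} : Set (Matrix (Fin 2) (Fin 2) ℂ)),
    PermPhase (Mᴴ * kron 1 b * M)

/-- The π/2-twisted basis measurement. -/
def M_tw : Matrix (Fin 4) (Fin 4) ℂ :=
  !![1,0,0,0; 0,1,0,0;
     0,0,((Real.sqrt 2 : ℂ))⁻¹,((Real.sqrt 2 : ℂ))⁻¹;
     0,0,((Real.sqrt 2 : ℂ))⁻¹,-((Real.sqrt 2 : ℂ))⁻¹]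

/-! In the ordering 00,01,10,11, `M_tw` is block diagonal with blocks `I₂` and the Hadamard
matrix `H`, while `I₂ ⊗ b` is block diagonal with blocks `b` and `b`. Conjugating gives the blocks
`b` and `H b H`, and `H` permutes the Pauli matrices up to sign (`X ↔ Z`, `Y ↦ -Y`). Each Pauli
matrix is a permutation matrix with phases, and this class is closed under negation, block sums
and reindexing. -/

def IsPermPhase {n : Type*} [DecidableEq n] (P : Matrix n n ℂ) : Prop :=
  ∃ (π : Equiv.Perm n) (φ : n → ℂ), (∀ j, ‖φ j‖ = 1) ∧ ∀ i j, P i j = if i = π j then φ j else 0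

namespace IsPermPhase

variable {m n : Type*} [DecidableEq m] [DecidableEq n]

theorem neg {P : Matrix n n ℂ} (hP : IsPermPhase P) : IsPermPhase (-P) := by
  obtain ⟨π, φ, hφ, hP⟩ := hP
  refine ⟨π, -φ, fun j => by simp [hφ], fun i j => ?_⟩
  rw [neg_apply, hP, Pi.neg_apply, apply_ite Neg.neg, neg_zero]

theorem reindex {P : Matrix m m ℂ} (hP : IsPermPhase P) (e : m ≃ n) :
    IsPermPhase (Matrix.reindex e e P) := by
  obtain ⟨π, φ, hφ, hP⟩ := hP
  refine ⟨e.permCongr π, φ ∘ e.symm, fun j => hφ _, fun i j => ?_⟩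
  simp only [reindex_apply, submatrix_apply, hP, Equiv.permCongr_apply, Function.comp_apply,
    Equiv.symm_apply_eq]
  congr -- the two sides differ only in their `Decidable` instances

theorem fromBlocks {A : Matrix m m ℂ} {D : Matrix n n ℂ} (hA : IsPermPhase A)
    (hD : IsPermPhase D) : IsPermPhase (Matrix.fromBlocks A 0 0 D) := by
  obtain ⟨πA, φA, hφA, hA⟩ := hA
  obtain ⟨πD, φD, hφD, hD⟩ := hD
  refine ⟨Equiv.sumCongr πA πD, Sum.elim φA φD, ?_, ?_⟩
  · rintro (j | j) <;> simp [hφA, hφD]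
  · rintro (i | i) (j | j) <;> simp [hA, hD]

end IsPermPhase

theorem isPermPhase_σX : IsPermPhase σX :=
  ⟨Equiv.swap 0 1, 1, fun _ => by simp, fun i j => by fin_cases i <;> fin_cases j <;> simp [σX]⟩

theorem isPermPhase_σY : IsPermPhase σY :=
  ⟨Equiv.swap 0 1, ![I, -I], fun j => by fin_cases j <;> simp,
    fun i j => by fin_cases i <;> fin_cases j <;> simp [σY]⟩

theorem isPermPhase_σZ : IsPermPhase σZ :=
  ⟨1, ![1, -1], fun j => by fin_cases j <;> simp,
    fun i j => by fin_cases i <;> fin_cases j <;> simp [σZ]⟩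

section BlockConjugation

variable {α : Type*} [Semiring α] [StarRing α] {m n : Type*} [Fintype m] [Fintype n]

theorem conjTranspose_reindex_mul_reindex_mul_reindex (e : m ≃ n) (U A : Matrix m m α) :
    (reindex e e U)ᴴ * reindex e e A * reindex e e U = reindex e e (Uᴴ * A * U) := by
  simp only [reindex_apply, conjTranspose_submatrix, submatrix_mul_equiv]

theorem conjTranspose_fromBlocks_one_mul_fromBlocks_mul_fromBlocks_one [DecidableEq m]
    (U : Matrix n n α) (A : Matrix m m α) (D : Matrix n n α) :
    (Matrix.fromBlocks 1 0 0 U)ᴴ * Matrix.fromBlocks A 0 0 D * Matrix.fromBlocks 1 0 0 U =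
      Matrix.fromBlocks A 0 0 (Uᴴ * D * U) := by
  simp [fromBlocks_conjTranspose, fromBlocks_multiply]

end BlockConjugation

def hadamardGate : Matrix (Fin 2) (Fin 2) ℂ := (Real.sqrt 2 : ℂ)⁻¹ • !![1, 1; 1, -1]

theorem conjTranspose_hadamardGate : hadamardGateᴴ = hadamardGate := by
  ext i j; fin_cases i <;> fin_cases j <;> simp [hadamardGate]

theorem inv_sqrt_two_sq : (Real.sqrt 2 : ℂ)⁻¹ ^ 2 = 2⁻¹ := by
  rw [inv_pow, ← ofReal_pow, Real.sq_sqrt zero_le_two, ofReal_ofNat]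

theorem hadamardGate_mul_σX_mul_hadamardGate : hadamardGate * σX * hadamardGate = σZ := by
  ext i j; fin_cases i <;> fin_cases j <;>
    simp [hadamardGate, σX, σZ, mul_apply, Fin.sum_univ_two] <;>
    ring_nf <;> simp only [inv_sqrt_two_sq] <;> ring

theorem hadamardGate_mul_σY_mul_hadamardGate : hadamardGate * σY * hadamardGate = -σY := by
  ext i j; fin_cases i <;> fin_cases j <;>
    simp [hadamardGate, σY, mul_apply, Fin.sum_univ_two] <;>
    ring_nf <;> simp only [inv_sqrt_two_sq] <;> ring

theorem hadamardGate_mul_σZ_mul_hadamardGate : hadamardGate * σZ * hadamardGate = σX := by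
  ext i j; fin_cases i <;> fin_cases j <;>
    simp [hadamardGate, σX, σZ, mul_apply, Fin.sum_univ_two] <;>
    ring_nf <;> simp only [inv_sqrt_two_sq] <;> ring

theorem M_tw_eq_reindex_fromBlocks :
    M_tw = reindex finSumFinEquiv finSumFinEquiv (Matrix.fromBlocks 1 0 0 hadamardGate) := by
  ext i j; fin_cases i <;> fin_cases j <;>
    simp [M_tw, hadamardGate, finSumFinEquiv, Fin.addCases]

theorem kron_one_eq_reindex_fromBlocks (b : Matrix (Fin 2) (Fin 2) ℂ) :
    kron 1 b = reindex finSumFinEquiv finSumFinEquiv (Matrix.fromBlocks b 0 0 b) := by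
  ext i j; fin_cases i <;> fin_cases j <;>
    simp [kron, pairEquiv, one_apply, finSumFinEquiv, Fin.addCases]

theorem conjTranspose_M_tw_mul_kron_one_mul_M_tw (b : Matrix (Fin 2) (Fin 2) ℂ) :
    M_twᴴ * kron 1 b * M_tw =
      reindex finSumFinEquiv finSumFinEquiv
        (Matrix.fromBlocks b 0 0 (hadamardGate * b * hadamardGate)) := by
  rw [M_tw_eq_reindex_fromBlocks, kron_one_eq_reindex_fromBlocks,
    conjTranspose_reindex_mul_reindex_mul_reindex,
    conjTranspose_fromBlocks_one_mul_fromBlocks_mul_fromBlocks_one, conjTranspose_hadamardGate]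

/-- The π/2-twisted basis measurement satisfies the one-ebit localizability condition. -/
theorem tw_one_ebit_condition : OneEbitLocal M_tw := by
  intro b hb
  show IsPermPhase _
  rw [conjTranspose_M_tw_mul_kron_one_mul_M_tw]
  refine (IsPermPhase.fromBlocks ?_ ?_).reindex _
  all_goals rcases hb with rfl | rfl | rfl
  · exact isPermPhase_σX
  · exact isPermPhase_σY
  · exact isPermPhase_σZ
  · rw [hadamardGate_mul_σX_mul_hadamardGate]; exact isPermPhase_σZ
  · rw [hadamardGate_mul_σY_mul_hadamardGate]; exact isPermPhase_σY.neg
  · rw [hadamardGate_mul_σZ_mul_hadamardGate]; exact isPermPhase_σX
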